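/- For any unit vector q ∈ ℝ⁴, any ω ∈ ℝ, and any N ≥ 0, the real matrix Toeplitz(qqᵀ, qqᵀcos ω, ..., qqᵀcos Nω) + Hankel(−qqᵀsin Nω, ..., −qqᵀsin ω, 0, qqᵀsin ω, ..., qqᵀsin Nω) is positive semidefinite. -/

import Mathlib

/-! Writing `θⱼ = jω - Nω/2`, the matrix is the rank-one Gram matrix `w wᵀ` of
`w (j, a) = (cos θⱼ + sin θⱼ) q a`, because
`(cos θⱼ + sin θⱼ)(cos θₖ + sin θₖ) = cos ((k - j) ω) + sin ((j + k - N) ω)`. -/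

open Matrix

/-- Block Toeplitz matrix with blocks `T 0, T 1, ..., T N` (transposed below the block
diagonal). -/
def blockToeplitz (d N : ℕ) (T : ℕ → Matrix (Fin d) (Fin d) ℝ) :
    Matrix (Fin (N + 1) × Fin d) (Fin (N + 1) × Fin d) ℝ :=
  fun p q =>
    if p.1.1 ≤ q.1.1 then T (q.1.1 - p.1.1) p.2 q.2 else (T (p.1.1 - q.1.1))ᵀ p.2 q.2

/-- Block Hankel matrix with blocks `s 1, ..., s (2N+1)`: block `(j,k)` (1-indexed) is
`s (j+k-1)`. -/
def blockHankel (d N : ℕ) (s : ℕ → Matrix (Fin d) (Fin d) ℝ) :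
    Matrix (Fin (N + 1) × Fin d) (Fin (N + 1) × Fin d) ℝ :=
  fun p q => s (p.1.1 + q.1.1 + 1) p.2 q.2

theorem Real.cos_add_sin_mul_cos_add_sin (a b : ℝ) :
    (Real.cos a + Real.sin a) * (Real.cos b + Real.sin b) =
      Real.cos (b - a) + Real.sin (a + b) := by
  rw [Real.cos_sub, Real.sin_add]
  ring

theorem Real.cos_natDist_mul (j k : ℕ) (ω : ℝ) :
    Real.cos (Nat.dist j k * ω) = Real.cos (((k : ℝ) - j) * ω) := by
  rcases le_total j k with h | h
  · rw [Nat.dist_eq_sub_of_le h, Nat.cast_sub h]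
  · rw [Nat.dist_eq_sub_of_le_right h, Nat.cast_sub h, ← Real.cos_neg]
    ring_nf

theorem blockToeplitz_smul_apply {d N : ℕ} (c : ℕ → ℝ) {A : Matrix (Fin d) (Fin d) ℝ}
    (hA : A.IsSymm) (p r : Fin (N + 1) × Fin d) :
    blockToeplitz d N (fun n => c n • A) p r = c (Nat.dist p.1 r.1) * A p.2 r.2 := by
  unfold blockToeplitz
  split_ifs with h
  · simp [Nat.dist_eq_sub_of_le h]
  · simp [Nat.dist_eq_sub_of_le_right (le_of_not_ge h), hA.apply]

noncomputable def toeplitzHankelFactor {d : ℕ} (N : ℕ) (q : Fin d → ℝ) (ω : ℝ) :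
    Fin (N + 1) × Fin d → ℝ :=
  fun p => (Real.cos (p.1 * ω - N * ω / 2) + Real.sin (p.1 * ω - N * ω / 2)) * q p.2

theorem blockToeplitz_add_blockHankel_eq_vecMulVec (d N : ℕ) (q : Fin d → ℝ) (ω : ℝ) :
    blockToeplitz d N (fun n => Real.cos (n * ω) • vecMulVec q q) +
        blockHankel d N (fun m => Real.sin (((m : ℝ) - (N + 1)) * ω) • vecMulVec q q) =
      vecMulVec (toeplitzHankelFactor N q ω) (toeplitzHankelFactor N q ω) := by
  ext ⟨j, a⟩ ⟨k, b⟩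
  have hsymm : (vecMulVec q q).IsSymm := by
    rw [IsSymm, transpose_vecMulVec]
  have hprod := Real.cos_add_sin_mul_cos_add_sin (j * ω - N * ω / 2) (k * ω - N * ω / 2)
  simp only [Matrix.add_apply, blockToeplitz_smul_apply _ hsymm, Real.cos_natDist_mul,
    blockHankel, Matrix.smul_apply, vecMulVec_apply, smul_eq_mul, toeplitzHankelFactor]
  push_cast
  rw [show ((k : ℝ) - j) * ω = k * ω - N * ω / 2 - (j * ω - N * ω / 2) by ring,
    show ((j : ℝ) + k + 1 - (N + 1)) * ω = j * ω - N * ω / 2 + (k * ω - N * ω / 2) by ring]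
  linear_combination -(q a * q b) * hprod

theorem toeplitz_hankel_psd_general (N : ℕ) (q : Fin 4 → ℝ) (ω : ℝ) :
    (blockToeplitz 4 N (fun n => Real.cos (n * ω) • vecMulVec q q) +
      blockHankel 4 N (fun m =>
        Real.sin (((m : ℝ) - (N + 1)) * ω) • vecMulVec q q)).PosSemidef := by
  rw [blockToeplitz_add_blockHankel_eq_vecMulVec]
  exact posSemidef_vecMulVec_self_star _

/-- for a unit vector `q ∈ ℝ⁴` and any `ω`,
`Toeplitz(qqᵀ, qqᵀcos ω, ..., qqᵀcos Nω) + Hankel(−qqᵀsin Nω, ..., 0, ..., qqᵀsin Nω)`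
is positive semidefinite.  (Note `−sin((N+1−m)ω) = sin((m−(N+1))ω)`.) -/
theorem toeplitz_hankel_psd (N : ℕ) (q : Fin 4 → ℝ) (hq : ∑ i, q i ^ 2 = 1) (ω : ℝ) :
    (blockToeplitz 4 N (fun n => Real.cos (n * ω) • vecMulVec q q) +
      blockHankel 4 N (fun m =>
        Real.sin (((m : ℝ) - (N + 1)) * ω) • vecMulVec q q)).PosSemidef :=
  toeplitz_hankel_psd_general N q ω
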